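/- arXiv:1809.05739 — 3 statements merged into one kernel-verified Lean document; each statement's English description precedes it below -/
import Mathlib

section
/- Let P be a finite set with 23 elements and let 𝓑 be a set of 7-element subsets of P (heptads) such that every 4-element subset of P is contained in exactly one member of 𝓑 (an S(4,7,23) Steiner system). Let σ be a permutation of P with σ ≠ id and σ² = id which maps every member of 𝓑 to a member of 𝓑. Then: (i) the set fix(σ) of fixed points of σ is a member of 𝓑, and it is the only heptad B with σ(B) = B and B ∩ supp(σ) = ∅; (ii) there are exactly 28 heptads B ∈ 𝓑 with |B ∩ supp(σ)| = 4 and σ(B) = B; (iii) there are exactly 112 heptads B ∈ 𝓑 with |B ∩ supp(σ)| = 4 and σ(B) ≠ B; (iv) there are exactly 112 heptads B ∈ 𝓑 with |B ∩ supp(σ)| = 6; (v) every heptad B ∈ 𝓑 with σ(B) ≠ B satisfies |B ∩ σ(B)| = 3. Here supp(σ) denotes the set of points moved by σ. -/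
/-!
Let `F` and `S` be the fixed points and the support of `σ`, and `s = |S|`. Two blocks sharing
four points coincide, so a block moved by `σ` meets its image, and hence `F`, in at most three
points, while a fixed block meets `S` in an even number of points. Double counting over the
blocks the `r`-subsets of `F` (`r ≤ 4`) and the `σ`-invariant 4-sets `{x, σx, y, σy}` and
`{x, σx, y, z}` (`x, y ∈ S`, resp. `y ≠ z ∈ F`) gives six linear equations for the numbers
of fixed blocks with `|B ∩ S| ∈ {0, 2, 4, 6}` and of moved blocks with `|B ∩ S| ∈ {4, …, 7}`.
For even `s ≠ 0` they have a solution in natural numbers only for `s = 16`, and then it is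
unique: one block inside `F` (so `F` itself), `28` fixed and `112` moved blocks meeting `S`
in four points, `112` moved ones meeting it in six. Finally `∑_B |B ∩ σB|` counts the blocks
through the pairs `{x, σx}`, which gives `7 · 77 + 16 · 21 = 875`; the `29` fixed blocks
contribute `203`, leaving `672 = 3 · 224` for the `224` moved blocks, each of which meets its
image in at most three points.
-/

open Finset Equiv

-- The block size is a separate hypothesis `∀ B ∈ 𝓑, #B = k`.
def IsSteinerSystem {α : Type*} (t : ℕ) (𝓑 : Finset (Finset α)) : Prop :=
  ∀ Q : Finset α, #Q = t → ∃! B, B ∈ 𝓑 ∧ Q ⊆ B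

namespace IsSteinerSystem

variable {α : Type*} {t : ℕ} {𝓑 : Finset (Finset α)}

theorem eq_of_subset_of_subset (h : IsSteinerSystem t 𝓑) {Q B B' : Finset α} (hQ : #Q = t)
    (hB : B ∈ 𝓑) (hB' : B' ∈ 𝓑) (hQB : Q ⊆ B) (hQB' : Q ⊆ B') : B = B' :=
  (h Q hQ).unique ⟨hB, hQB⟩ ⟨hB', hQB'⟩

variable [DecidableEq α]

theorem card_filter_superset_eq_one (h : IsSteinerSystem t 𝓑) {Q : Finset α} (hQ : #Q = t) :
    #{B ∈ 𝓑 | Q ⊆ B} = 1 := by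
  obtain ⟨B, hB, huniq⟩ := h Q hQ
  exact card_eq_one.2 ⟨B, eq_singleton_iff_unique_mem.2
    ⟨mem_filter.2 hB, fun B' hB' => huniq B' (mem_filter.1 hB')⟩⟩

theorem card_inter_lt (h : IsSteinerSystem t 𝓑) {B B' : Finset α} (hB : B ∈ 𝓑)
    (hB' : B' ∈ 𝓑) (hne : B ≠ B') : #(B ∩ B') < t := by
  by_contra! hle
  obtain ⟨Q, hQ, hQt⟩ := exists_subset_card_eq hle
  exact hne (h.eq_of_subset_of_subset hQt hB hB' (hQ.trans inter_subset_left)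
    (hQ.trans inter_subset_right))

theorem sum_card_filter_subset {β : Type*} (h : IsSteinerSystem t 𝓑) (X : Finset β)
    (g : β → Finset α) (hg : ∀ x ∈ X, #(g x) = t) :
    ∑ B ∈ 𝓑, #{x ∈ X | g x ⊆ B} = #X :=
  calc ∑ B ∈ 𝓑, #{x ∈ X | g x ⊆ B} = ∑ x ∈ X, #{B ∈ 𝓑 | g x ⊆ B} :=
        sum_card_bipartiteAbove_eq_sum_card_bipartiteBelow (fun B x => g x ⊆ B)
    _ = ∑ _x ∈ X, 1 := sum_congr rfl fun x hx => h.card_filter_superset_eq_one (hg x hx)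
    _ = #X := (card_eq_sum_ones X).symm

theorem card_filter_superset_mul_choose [Fintype α] {k : ℕ}
    (h : IsSteinerSystem t 𝓑) (hk : ∀ B ∈ 𝓑, #B = k) {T : Finset α} (hT : #T ≤ t) :
    #{B ∈ 𝓑 | T ⊆ B} * (k - #T).choose (t - #T)
      = (Fintype.card α - #T).choose (t - #T) := by
  have hcount := h.sum_card_filter_subset {Q ∈ univ.powersetCard t | T ⊆ Q} id
    fun Q hQ => (mem_powersetCard.1 (mem_filter.1 hQ).1).2
  rw [card_filter_powersetCard_subset _ _ _ (subset_univ T) hT, card_univ] at hcount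
  rw [← hcount, ← smul_eq_mul, ← sum_const, sum_filter]
  refine sum_congr rfl fun B hB => ?_
  rw [filter_filter]
  split_ifs with hTB
  · rw [← hk B hB, ← card_filter_powersetCard_subset T B t hTB hT]
    congr 1
    ext Q
    simp only [mem_filter, mem_powersetCard, subset_univ, true_and, id]
    tauto
  · exact (card_eq_zero.2 (filter_eq_empty_iff.2 fun Q _ hQ => hTB (hQ.1.trans hQ.2))).symm

end IsSteinerSystem

theorem Finset.sum_choose_card_inter {α : Type*} [DecidableEq α] {𝓑 : Finset (Finset α)}
    {r L : ℕ} (hL : ∀ T : Finset α, #T = r → #{B ∈ 𝓑 | T ⊆ B} = L) (U : Finset α) :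
    ∑ B ∈ 𝓑, (#(B ∩ U)).choose r = (#U).choose r * L :=
  calc ∑ B ∈ 𝓑, (#(B ∩ U)).choose r
        = ∑ B ∈ 𝓑, #{T ∈ U.powersetCard r | T ⊆ B} := by
        refine sum_congr rfl fun B _ => ?_
        rw [← card_powersetCard]
        refine congrArg card (ext fun T => ?_)
        simp only [mem_powersetCard, mem_filter, subset_inter_iff]
        tauto
    _ = ∑ T ∈ U.powersetCard r, #{B ∈ 𝓑 | T ⊆ B} :=
        sum_card_bipartiteAbove_eq_sum_card_bipartiteBelow (fun (B T : Finset α) => T ⊆ B)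
    _ = (#U).choose r * L := by
        rw [sum_congr rfl fun T hT => hL T (mem_powersetCard.1 hT).2, sum_const,
          card_powersetCard, smul_eq_mul]

theorem Finset.sum_eq_sum_mul_card_fiber {ι κ : Type*} [DecidableEq κ] {s : Finset ι}
    {K : Finset κ} {g : ι → κ} (hg : ∀ i ∈ s, g i ∈ K) (φ : κ → ℕ) :
    ∑ i ∈ s, φ (g i) = ∑ k ∈ K, φ k * #{i ∈ s | g i = k} := by
  rw [← sum_fiberwise_of_maps_to' hg]
  exact sum_congr rfl fun k _ => by rw [sum_const, smul_eq_mul, mul_comm]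

theorem Equiv.Perm.apply_apply_of_sq_eq_one {α : Type*} {σ : Perm α} (hσ : σ ^ 2 = 1)
    (x : α) : σ (σ x) = x := by
  simpa [sq] using congr($hσ x)

section Involution

variable {α : Type*} [DecidableEq α] {σ : Perm α}

theorem Finset.mem_image_perm_of_sq_eq_one (hσ : σ ^ 2 = 1) {B : Finset α} {x : α} :
    x ∈ B.image σ ↔ σ x ∈ B := by
  rw [mem_image]
  refine ⟨?_, fun h => ⟨σ x, h, σ.apply_apply_of_sq_eq_one hσ x⟩⟩
  rintro ⟨y, hy, rfl⟩
  rwa [σ.apply_apply_of_sq_eq_one hσ]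

theorem Finset.image_pair_perm_of_sq_eq_one (hσ : σ ^ 2 = 1) (x : α) :
    ({x, σ x} : Finset α).image σ = {x, σ x} := by
  rw [image_insert, image_singleton, σ.apply_apply_of_sq_eq_one hσ, pair_comm]

theorem Finset.card_filter_ne_ne_apply {W : Finset α}
    (hW : ∀ x ∈ W, σ x ∈ W ∧ σ x ≠ x) :
    #{p ∈ W ×ˢ W | p.2 ≠ p.1 ∧ p.2 ≠ σ p.1} = #W * (#W - 2) := by
  rw [card_filter, sum_product, ← smul_eq_mul, ← sum_const]
  refine sum_congr rfl fun x hx => ?_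
  have hfilter : {y ∈ W | y ≠ x ∧ y ≠ σ x} = W \ {x, σ x} := by
    ext y; simp
  rw [← card_filter, hfilter,
    card_sdiff_of_subset (by simp [insert_subset_iff, hx, (hW x hx).1]),
    card_pair (hW x hx).2.symm]

theorem Finset.apply_mem_of_image_eq {B : Finset α} (hB : B.image σ = B) {x : α}
    (hx : x ∈ B) : σ x ∈ B :=
  hB ▸ mem_image_of_mem σ hx

variable [Fintype α]

theorem Finset.forall_mem_inter_support {B : Finset α} (hB : B.image σ = B) :
    ∀ x ∈ B ∩ σ.support, σ x ∈ B ∩ σ.support ∧ σ x ≠ x := fun _ hx =>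
  ⟨mem_inter.2 ⟨apply_mem_of_image_eq hB (mem_inter.1 hx).1,
    Perm.apply_mem_support.2 (mem_inter.1 hx).2⟩, Perm.mem_support.1 (mem_inter.1 hx).2⟩

theorem Finset.two_dvd_card_inter_support (hσ : σ ^ 2 = 1) {B : Finset α}
    (hB : B.image σ = B) : 2 ∣ #(B ∩ σ.support) := by
  have hBσ : ∀ x, σ x ∈ B ↔ x ∈ B := fun x => by
    rw [← mem_image_perm_of_sq_eq_one hσ, hB]
  have := Perm.two_dvd_card_support (σ := σ.subtypePerm hBσ) (by
    ext x; simp [sq, Perm.apply_apply_of_sq_eq_one hσ])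
  rw [Perm.support_subtypePerm, ← card_map (Function.Embedding.subtype _)] at this
  convert this using 2
  ext x; simp [and_comm]

theorem Finset.sum_card_inter_image_of_sq_eq_one (hσ : σ ^ 2 = 1) (𝓑 : Finset (Finset α)) :
    ∑ B ∈ 𝓑, #(B ∩ B.image σ) = ∑ x, #{B ∈ 𝓑 | {x, σ x} ⊆ B} :=
  calc ∑ B ∈ 𝓑, #(B ∩ B.image σ) = ∑ B ∈ 𝓑, #{x ∈ univ | {x, σ x} ⊆ B} :=
        sum_congr rfl fun B _ => congrArg card <| ext fun x => by
          simp [mem_image_perm_of_sq_eq_one hσ, insert_subset_iff]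
    _ = _ := sum_card_bipartiteAbove_eq_sum_card_bipartiteBelow
        (fun (B : Finset α) x => {x, σ x} ⊆ B)

end Involution

namespace IsSteinerSystem

variable {α : Type*} [DecidableEq α] {t : ℕ} {𝓑 : Finset (Finset α)} {σ : Perm α}

theorem image_eq_of_subset (h : IsSteinerSystem t 𝓑) (hσB : ∀ B ∈ 𝓑, B.image σ ∈ 𝓑)
    {Q B : Finset α} (hQ : #Q = t) (hQσ : Q.image σ = Q) (hB : B ∈ 𝓑) (hQB : Q ⊆ B) :
    B.image σ = B :=
  h.eq_of_subset_of_subset hQ (hσB B hB) hB (hQσ ▸ image_subset_image hQB) hQB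

theorem card_sdiff_support_lt [Fintype α] (h : IsSteinerSystem t 𝓑)
    (hσB : ∀ B ∈ 𝓑, B.image σ ∈ 𝓑) {B : Finset α} (hB : B ∈ 𝓑)
    (hmoved : B.image σ ≠ B) : #(B \ σ.support) < t := by
  refine lt_of_le_of_lt (card_le_card fun x hx => ?_)
    (h.card_inter_lt hB (hσB B hB) (Ne.symm hmoved))
  obtain ⟨hxB, hxσ⟩ := mem_sdiff.1 hx
  rw [Perm.notMem_support] at hxσ
  exact mem_inter.2 ⟨hxB, hxσ ▸ mem_image_of_mem σ hxB⟩

theorem sum_fixed_card_filter_subset {β : Type*} (h : IsSteinerSystem t 𝓑)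
    (hσB : ∀ B ∈ 𝓑, B.image σ ∈ 𝓑) (X : Finset β) (g : β → Finset α)
    (hg : ∀ x ∈ X, #(g x) = t ∧ (g x).image σ = g x) :
    ∑ B ∈ 𝓑 with B.image σ = B, #{x ∈ X | g x ⊆ B} = #X := by
  rw [sum_filter, ← h.sum_card_filter_subset X g fun x hx => (hg x hx).1]
  refine sum_congr rfl fun B hB => ?_
  split_ifs with hfix
  · rfl
  · exact (card_eq_zero.2 (filter_eq_empty_iff.2 fun x hx hxB =>
      hfix (h.image_eq_of_subset hσB (hg x hx).1 (hg x hx).2 hB hxB))).symm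

variable [Fintype α]

theorem sum_fixed_card_inter_support_mul (h : IsSteinerSystem 4 𝓑) (hσ : σ ^ 2 = 1)
    (hσB : ∀ B ∈ 𝓑, B.image σ ∈ 𝓑) :
    ∑ B ∈ 𝓑 with B.image σ = B, #(B ∩ σ.support) * (#(B ∩ σ.support) - 2)
      = #σ.support * (#σ.support - 2) := by
  set X := {p ∈ σ.support ×ˢ σ.support | p.2 ≠ p.1 ∧ p.2 ≠ σ p.1}
  let g : α × α → Finset α := fun p => {p.1, σ p.1} ∪ {p.2, σ p.2}
  have hg : ∀ p ∈ X, #(g p) = 4 ∧ (g p).image σ = g p := by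
    rintro ⟨x, y⟩ hp
    simp only [X, mem_filter, mem_product, Perm.mem_support] at hp
    obtain ⟨⟨hx, hy⟩, hyx, hyσx⟩ := hp
    refine ⟨?_, by simp only [g, image_union, image_pair_perm_of_sq_eq_one hσ]⟩
    have hσyx : σ y ≠ x := fun hxy => hyσx (by rw [← hxy, σ.apply_apply_of_sq_eq_one hσ])
    have hdisj : Disjoint ({x, σ x} : Finset α) {y, σ y} := by
      simp [hyx, hyσx, hσyx]
    rw [card_union_of_disjoint hdisj, card_pair hx.symm, card_pair hy.symm]
  have hblock : ∀ B ∈ 𝓑, B.image σ = B → {p ∈ X | g p ⊆ B}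
      = {p ∈ (B ∩ σ.support) ×ˢ (B ∩ σ.support) | p.2 ≠ p.1 ∧ p.2 ≠ σ p.1} := by
    intro B _ hB
    ext ⟨x, y⟩
    simp only [X, g, mem_filter, mem_product, mem_inter, union_subset_iff, insert_subset_iff,
      singleton_subset_iff]
    constructor
    · rintro ⟨⟨⟨hx, hy⟩, hne⟩, ⟨hxB, -⟩, hyB, -⟩
      exact ⟨⟨⟨hxB, hx⟩, hyB, hy⟩, hne⟩
    · rintro ⟨⟨⟨hxB, hx⟩, hyB, hy⟩, hne⟩
      exact ⟨⟨⟨hx, hy⟩, hne⟩, ⟨hxB, apply_mem_of_image_eq hB hxB⟩, hyB,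
        apply_mem_of_image_eq hB hyB⟩
  rw [← card_filter_ne_ne_apply fun x hx =>
      ⟨Perm.apply_mem_support.2 hx, Perm.mem_support.1 hx⟩,
    ← h.sum_fixed_card_filter_subset hσB X g hg]
  refine sum_congr rfl fun B hB => ?_
  obtain ⟨hB, hfix⟩ := mem_filter.1 hB
  rw [hblock B hB hfix, card_filter_ne_ne_apply (forall_mem_inter_support hfix)]

theorem sum_fixed_card_inter_support_mul_card_offDiag (h : IsSteinerSystem 4 𝓑)
    (hσ : σ ^ 2 = 1) (hσB : ∀ B ∈ 𝓑, B.image σ ∈ 𝓑) :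
    ∑ B ∈ 𝓑 with B.image σ = B, #(B ∩ σ.support) * #(B \ σ.support).offDiag
      = #σ.support * #σ.supportᶜ.offDiag := by
  set X := σ.support ×ˢ σ.supportᶜ.offDiag
  let g : α × α × α → Finset α := fun p => {p.1, σ p.1} ∪ {p.2.1, p.2.2}
  have hg : ∀ p ∈ X, #(g p) = 4 ∧ (g p).image σ = g p := by
    rintro ⟨x, y, z⟩ hp
    simp only [X, mem_product, mem_offDiag, mem_compl, Perm.mem_support, not_not] at hp
    obtain ⟨hx, hy, hz, hyz⟩ := hp
    refine ⟨?_, by simp only [g, image_union, image_pair_perm_of_sq_eq_one hσ, image_insert,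
      image_singleton, hy, hz]⟩
    have hyx : y ≠ x := fun e => hx (e ▸ hy)
    have hzx : z ≠ x := fun e => hx (e ▸ hz)
    have hyσx : y ≠ σ x := fun e => hyx (by rw [← hy, e, σ.apply_apply_of_sq_eq_one hσ])
    have hzσx : z ≠ σ x := fun e => hzx (by rw [← hz, e, σ.apply_apply_of_sq_eq_one hσ])
    have hdisj : Disjoint ({x, σ x} : Finset α) {y, z} := by
      simp [hyx, hzx, hyσx, hzσx]
    rw [card_union_of_disjoint hdisj, card_pair hx.symm, card_pair hyz]
  have hblock : ∀ B ∈ 𝓑, B.image σ = B →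
      {p ∈ X | g p ⊆ B} = (B ∩ σ.support) ×ˢ (B \ σ.support).offDiag := by
    intro B _ hB
    ext ⟨x, y, z⟩
    simp only [X, g, mem_filter, mem_product, mem_offDiag, mem_inter, mem_sdiff, mem_compl,
      union_subset_iff, insert_subset_iff, singleton_subset_iff]
    constructor
    · rintro ⟨⟨hx, ⟨hy, hz, hyz⟩⟩, ⟨hxB, -⟩, hyB, hzB⟩
      exact ⟨⟨hxB, hx⟩, ⟨hyB, hy⟩, ⟨hzB, hz⟩, hyz⟩
    · rintro ⟨⟨hxB, hx⟩, ⟨hyB, hy⟩, ⟨hzB, hz⟩, hyz⟩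
      exact ⟨⟨hx, ⟨hy, hz, hyz⟩⟩, ⟨hxB, apply_mem_of_image_eq hB hxB⟩, hyB, hzB⟩
  rw [← card_product, ← h.sum_fixed_card_filter_subset hσB X g hg]
  refine sum_congr rfl fun B hB => ?_
  obtain ⟨hB, hfix⟩ := mem_filter.1 hB
  rw [hblock B hB hfix, card_product]

end IsSteinerSystem

namespace SteinerSystem4723

variable {𝓑 : Finset (Finset (Fin 23))} {σ : Perm (Fin 23)}

def fixedCount (𝓑 : Finset (Finset (Fin 23))) (σ : Perm (Fin 23)) (k : ℕ) : ℕ :=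
  #{B ∈ 𝓑 | B.image σ = B ∧ #(B ∩ σ.support) = k}

def movedCount (𝓑 : Finset (Finset (Fin 23))) (σ : Perm (Fin 23)) (k : ℕ) : ℕ :=
  #{B ∈ 𝓑 | B.image σ ≠ B ∧ #(B ∩ σ.support) = k}

theorem fixedCount_add_movedCount (𝓑 : Finset (Finset (Fin 23))) (σ : Perm (Fin 23))
    (k : ℕ) :
    fixedCount 𝓑 σ k + movedCount 𝓑 σ k = #{B ∈ 𝓑 | #(B ∩ σ.support) = k} := by
  rw [← card_filter_add_card_filter_not (s := {B ∈ 𝓑 | #(B ∩ σ.support) = k})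
    fun B => B.image σ = B, filter_filter, filter_filter]
  simp only [fixedCount, movedCount, and_comm, ne_eq]

theorem card_filter_superset (hcard : ∀ B ∈ 𝓑, #B = 7) (h : IsSteinerSystem 4 𝓑)
    {T : Finset (Fin 23)} {r : ℕ} (hT : #T = r) (hr : r ≤ 4) :
    #{B ∈ 𝓑 | T ⊆ B} = (23 - r).choose (4 - r) / (7 - r).choose (4 - r) := by
  have hmul := h.card_filter_superset_mul_choose hcard (hT ▸ hr)
  rw [hT, Fintype.card_fin] at hmul
  exact Nat.eq_div_of_mul_eq_left (Nat.choose_pos (by omega)).ne' hmul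

theorem card_eq (hcard : ∀ B ∈ 𝓑, #B = 7) (h : IsSteinerSystem 4 𝓑) : #𝓑 = 253 := by
  simpa [Nat.choose_eq_descFactorial_div_factorial, Nat.descFactorial, Nat.factorial]
    using card_filter_superset hcard h (T := ∅) rfl (by norm_num)

theorem card_sdiff_support (hcard : ∀ B ∈ 𝓑, #B = 7) {B : Finset (Fin 23)}
    (hB : B ∈ 𝓑) : #(B \ σ.support) = 7 - #(B ∩ σ.support) := by
  rw [← hcard B hB, ← card_inter_add_card_sdiff B σ.support]
  omega

theorem card_inter_support_mem_of_image_eq (hcard : ∀ B ∈ 𝓑, #B = 7) (hσ : σ ^ 2 = 1)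
    {B : Finset (Fin 23)} (hB : B ∈ 𝓑) (hfix : B.image σ = B) :
    #(B ∩ σ.support) ∈ ({0, 2, 4, 6} : Finset ℕ) := by
  have h2 := two_dvd_card_inter_support hσ hfix
  have h7 : #(B ∩ σ.support) ≤ 7 := hcard B hB ▸ card_le_card inter_subset_left
  simp only [mem_insert, mem_singleton]
  omega

theorem card_inter_support_mem_of_image_ne (hcard : ∀ B ∈ 𝓑, #B = 7)
    (h : IsSteinerSystem 4 𝓑) (hσB : ∀ B ∈ 𝓑, B.image σ ∈ 𝓑) {B : Finset (Fin 23)} (hB : B ∈ 𝓑)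
    (hmoved : B.image σ ≠ B) : #(B ∩ σ.support) ∈ ({4, 5, 6, 7} : Finset ℕ) := by
  have hlt := h.card_sdiff_support_lt hσB hB hmoved
  have hsplit := card_inter_add_card_sdiff B σ.support
  rw [hcard B hB] at hsplit
  simp only [mem_insert, mem_singleton]
  omega

theorem sum_fixed_eq_fixedCount (hcard : ∀ B ∈ 𝓑, #B = 7) (hσ : σ ^ 2 = 1)
    (φ : ℕ → ℕ) :
    ∑ B ∈ 𝓑 with B.image σ = B, φ #(B ∩ σ.support)
      = ∑ k ∈ {0, 2, 4, 6}, φ k * fixedCount 𝓑 σ k := by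
  rw [sum_eq_sum_mul_card_fiber fun B hB =>
    card_inter_support_mem_of_image_eq hcard hσ (mem_filter.1 hB).1 (mem_filter.1 hB).2]
  simp only [fixedCount, filter_filter]

theorem sum_eq_fixedCount_add_movedCount (hcard : ∀ B ∈ 𝓑, #B = 7)
    (h : IsSteinerSystem 4 𝓑) (hσ : σ ^ 2 = 1) (hσB : ∀ B ∈ 𝓑, B.image σ ∈ 𝓑) (φ : ℕ → ℕ) :
    ∑ B ∈ 𝓑, φ #(B ∩ σ.support)
      = ∑ k ∈ {0, 2, 4, 6}, φ k * fixedCount 𝓑 σ k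
        + ∑ k ∈ {4, 5, 6, 7}, φ k * movedCount 𝓑 σ k := by
  rw [← sum_filter_add_sum_filter_not 𝓑 fun B => B.image σ = B,
    sum_fixed_eq_fixedCount hcard hσ, sum_eq_sum_mul_card_fiber fun B hB =>
      card_inter_support_mem_of_image_ne hcard h hσB (mem_filter.1 hB).1 (mem_filter.1 hB).2]
  simp only [movedCount, filter_filter]

theorem involution_block_counts (hcard : ∀ B ∈ 𝓑, #B = 7) (h : IsSteinerSystem 4 𝓑)
    (hσ1 : σ ≠ 1) (hσ2 : σ ^ 2 = 1) (hσB : ∀ B ∈ 𝓑, B.image σ ∈ 𝓑) :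
    #σ.support = 16 ∧ fixedCount 𝓑 σ 0 = 1 ∧ fixedCount 𝓑 σ 2 = 0 ∧
      fixedCount 𝓑 σ 4 = 28 ∧ fixedCount 𝓑 σ 6 = 0 ∧ movedCount 𝓑 σ 4 = 112 ∧
      movedCount 𝓑 σ 6 = 112 := by
  have hsubsets (r : ℕ) (hr : r ≤ 4) :
      ∑ k ∈ {0, 2, 4, 6}, (7 - k).choose r * fixedCount 𝓑 σ k
        + ∑ k ∈ {4, 5, 6, 7}, (7 - k).choose r * movedCount 𝓑 σ k
      = (23 - #σ.support).choose r * ((23 - r).choose (4 - r) / (7 - r).choose (4 - r)) := by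
    rw [← sum_eq_fixedCount_add_movedCount hcard h hσ2 hσB fun j => (7 - j).choose r,
      sum_congr rfl fun B hB => by rw [← card_sdiff_support hcard hB, sdiff_eq_inter_compl],
      sum_choose_card_inter (fun T hT => card_filter_superset hcard h hT hr), card_compl,
      Fintype.card_fin]
  have hcycles := (sum_fixed_eq_fixedCount hcard hσ2 fun j => j * (j - 2)).symm.trans
    (h.sum_fixed_card_inter_support_mul hσ2 hσB)
  have hmixed :=
    (sum_fixed_eq_fixedCount hcard hσ2 fun j => j * ((7 - j) * (7 - j) - (7 - j))).symm.trans <|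
      (sum_congr rfl fun B hB => by
        rw [offDiag_card, card_sdiff_support hcard (mem_filter.1 hB).1]).trans
      (h.sum_fixed_card_inter_support_mul_card_offDiag hσ2 hσB)
  rw [offDiag_card, card_compl, Fintype.card_fin] at hmixed
  have hsub1 := hsubsets 1 (by norm_num)
  have hsub2 := hsubsets 2 (by norm_num)
  have hsub3 := hsubsets 3 (by norm_num)
  have hsub4 := hsubsets 4 (by norm_num)
  obtain ⟨r, hr⟩ := Perm.two_dvd_card_support hσ2
  have hr0 : r ≠ 0 := by
    rintro rfl
    exact hσ1 (Perm.card_support_eq_zero.1 hr)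
  have hr11 : r ≤ 11 := by
    have := card_le_univ σ.support
    rw [Fintype.card_fin] at this
    omega
  rw [hr] at hcycles hmixed hsub1 hsub2 hsub3 hsub4 ⊢
  norm_num [sum_insert, Nat.choose_eq_descFactorial_div_factorial, Nat.descFactorial,
    Nat.factorial] at hcycles hmixed hsub1 hsub2 hsub3 hsub4
  interval_cases r <;> simp only [Nat.reduceMul, Nat.reduceSub, Nat.reduceDiv, true_and] at * <;>
    omega

theorem eq_compl_support (hcard : ∀ B ∈ 𝓑, #B = 7) (hs : #σ.support = 16)
    {B : Finset (Fin 23)} (hB : B ∈ 𝓑) (hBσ : B ∩ σ.support = ∅) : B = σ.supportᶜ :=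
  eq_of_subset_of_card_le
    (subset_compl_iff_disjoint_right.2 (disjoint_iff_inter_eq_empty.2 hBσ))
    (by rw [card_compl, Fintype.card_fin, hs, hcard B hB])

theorem compl_support_mem (hcard : ∀ B ∈ 𝓑, #B = 7) (hs : #σ.support = 16)
    (h0 : fixedCount 𝓑 σ 0 = 1) : σ.supportᶜ ∈ 𝓑 := by
  obtain ⟨B, hB⟩ := card_eq_one.1 h0
  obtain ⟨hB𝓑, -, hBσ⟩ := mem_filter.1 (hB ▸ mem_singleton_self B)
  exact eq_compl_support hcard hs hB𝓑 (card_eq_zero.1 hBσ) ▸ hB𝓑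

theorem card_inter_image_eq_three (hcard : ∀ B ∈ 𝓑, #B = 7) (h : IsSteinerSystem 4 𝓑)
    (hσ : σ ^ 2 = 1) (hσB : ∀ B ∈ 𝓑, B.image σ ∈ 𝓑) (hs : #σ.support = 16)
    (hfixed : #{B ∈ 𝓑 | B.image σ = B} = 29) {B : Finset (Fin 23)} (hB : B ∈ 𝓑)
    (hmoved : B.image σ ≠ B) : #(B ∩ B.image σ) = 3 := by
  have htotal : ∑ B ∈ 𝓑, #(B ∩ B.image σ) = 875 := by
    rw [sum_card_inter_image_of_sq_eq_one hσ, ← sum_add_sum_compl σ.support]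
    rw [sum_congr rfl fun x hx => card_filter_superset hcard h
        (card_pair (Perm.mem_support.1 hx).symm) (by norm_num),
      sum_congr rfl fun x hx => card_filter_superset hcard h
        (by rw [Perm.notMem_support.1 (mem_compl.1 hx), pair_eq_singleton, card_singleton])
        (by norm_num)]
    simp [card_compl, hs, Nat.choose_eq_descFactorial_div_factorial, Nat.descFactorial,
      Nat.factorial]
  have hfixedsum : ∑ B ∈ 𝓑 with B.image σ = B, #(B ∩ B.image σ) = 29 * 7 := by
    rw [← hfixed, ← smul_eq_mul, ← sum_const]
    exact sum_congr rfl fun B hB => by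
      rw [(mem_filter.1 hB).2, inter_self, hcard B (mem_filter.1 hB).1]
  have hmovedcard : #{B ∈ 𝓑 | ¬B.image σ = B} = 224 := by
    have := card_filter_add_card_filter_not (s := 𝓑) fun B => B.image σ = B
    rw [hfixed, card_eq hcard h] at this
    omega
  have hmovedsum : ∑ B ∈ 𝓑 with ¬B.image σ = B, #(B ∩ B.image σ)
      = ∑ B ∈ 𝓑 with ¬B.image σ = B, 3 := by
    rw [sum_const, hmovedcard, smul_eq_mul]
    have := sum_filter_add_sum_filter_not 𝓑 (fun B => B.image σ = B)
      fun B => #(B ∩ B.image σ)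
    omega
  have hle : ∀ B ∈ {B ∈ 𝓑 | ¬B.image σ = B}, #(B ∩ B.image σ) ≤ 3 := fun B hB =>
    Nat.le_of_lt_succ <| h.card_inter_lt (mem_filter.1 hB).1 (hσB B (mem_filter.1 hB).1)
      (Ne.symm (mem_filter.1 hB).2)
  exact (sum_eq_sum_iff_of_le hle).1 hmovedsum B (mem_filter.2 ⟨hB, hmoved⟩)

end SteinerSystem4723

open SteinerSystem4723

/-- **Proposition 9.2 (Gillespie).** Let `(P, 𝓑)` be an `S(4,7,23)` Steiner system and `σ`
an involutory automorphism. Then `fix(σ)` is the unique heptad fixed by `σ` and disjoint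
from `supp(σ)`; there are exactly `28` heptads meeting `supp(σ)` in `4` points that are
fixed by `σ`, exactly `112` meeting it in `4` points that are moved, and exactly `112`
meeting it in `6` points; and any heptad moved by `σ` meets its image in `3` points. -/
theorem stmt_16 (𝓑 : Finset (Finset (Fin 23)))
    (hcard : ∀ B ∈ 𝓑, B.card = 7)
    (hSteiner : ∀ Q : Finset (Fin 23), Q.card = 4 → ∃! B, B ∈ 𝓑 ∧ Q ⊆ B)
    (σ : Equiv.Perm (Fin 23)) (hσ1 : σ ≠ 1) (hσ2 : σ ^ 2 = 1)
    (hσB : ∀ B ∈ 𝓑, B.image σ ∈ 𝓑) :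
    ((univ.filter fun x => σ x = x) ∈ 𝓑 ∧
      ∀ B ∈ 𝓑, B.image σ = B → B ∩ (univ.filter fun x => σ x ≠ x) = ∅ →
        B = univ.filter fun x => σ x = x) ∧
    (𝓑.filter fun B =>
      (B ∩ (univ.filter fun x => σ x ≠ x)).card = 4 ∧ B.image σ = B).card = 28 ∧
    (𝓑.filter fun B =>
      (B ∩ (univ.filter fun x => σ x ≠ x)).card = 4 ∧ B.image σ ≠ B).card = 112 ∧
    (𝓑.filter fun B =>
      (B ∩ (univ.filter fun x => σ x ≠ x)).card = 6).card = 112 ∧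
    (∀ B ∈ 𝓑, B.image σ ≠ B → (B ∩ B.image σ).card = 3) := by
  have h : IsSteinerSystem 4 𝓑 := hSteiner
  obtain ⟨hs, h0, h2, h4, h6, hm4, hm6⟩ := involution_block_counts hcard h hσ1 hσ2 hσB
  have hfixed : #{B ∈ 𝓑 | B.image σ = B} = 29 := by
    simpa [sum_insert, h0, h2, h4, h6] using sum_fixed_eq_fixedCount hcard hσ2 fun _ => 1
  have hF : (univ.filter fun x => σ x = x) = σ.supportᶜ := by
    ext
    simp
  have hS : (univ.filter fun x => σ x ≠ x) = σ.support := rfl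
  rw [hF, hS]
  refine ⟨⟨compl_support_mem hcard hs h0, fun B hB _ => eq_compl_support hcard hs hB⟩,
    ?_, ?_, ?_, fun B => card_inter_image_eq_three hcard h hσ2 hσB hs hfixed⟩
  · simpa [fixedCount, and_comm] using h4
  · simpa [movedCount, and_comm] using hm4
  · rw [← fixedCount_add_movedCount, h6, hm6]
end

section
/- Let i ≥ 1 be an integer. If there exists a quasi-symmetric 2-(2i(2i+1), i(2i+1), i(2i−1)(i+1)) design with block intersection numbers i² + i and i², then there exists a quasi-symmetric 2-(2i(2i+1) − 1, (2i−1)(i+1), i(2i² + i − 2)) design with block intersection numbers i² + i − 1 and i² − 1. -/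
/-!
Fix a point `x`. Since `v = 2k`, the complement of a block is again a `k`-set; replace every
block missing `x` by its complement and then delete `x` from all blocks. A pair `{a, b}` of the
remaining points lies in a new block exactly when `x, a, b` all lie in, or all miss, the old
block, and by inclusion–exclusion there are `3λ - r` such blocks (`r` the replication number;
there are `2r` blocks). Two new blocks meet in `|B ∩ C| - 1` points if `B, C` lie on the
same side of `x` and in `k - |B ∩ C| - 1` points otherwise; as `k = s₁ + s₂` this lands in
`{s₁ - 1, s₂ - 1}`. Both values occur: if, for a fixed block `B₀`, only one value `t - 1` occurred,
summing `|B₀ ∩ C|` over the other blocks would give `(r - 1) t + r (k - t) = k (r - 1)`, forcing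
`t = k`.
-/

open Finset

variable {α β : Type*} [DecidableEq α]

structure IsTwoDesign (𝓑 : Finset (Finset α)) (k lam : ℕ) : Prop where
  card_eq : ∀ B ∈ 𝓑, #B = k
  card_filter_subset : ∀ p : Finset α, #p = 2 → #{B ∈ 𝓑 | p ⊆ B} = lam

structure IsQuasiSymmetricDesign (𝓑 : Finset (Finset α)) (k lam s₁ s₂ : ℕ) : Prop
    extends IsTwoDesign 𝓑 k lam where
  card_inter : ∀ B₁ ∈ 𝓑, ∀ B₂ ∈ 𝓑, B₁ ≠ B₂ → #(B₁ ∩ B₂) = s₁ ∨ #(B₁ ∩ B₂) = s₂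
  exists_card_inter_eq_left : ∃ B₁ ∈ 𝓑, ∃ B₂ ∈ 𝓑, B₁ ≠ B₂ ∧ #(B₁ ∩ B₂) = s₁
  exists_card_inter_eq_right : ∃ B₁ ∈ 𝓑, ∃ B₂ ∈ 𝓑, B₁ ≠ B₂ ∧ #(B₁ ∩ B₂) = s₂

theorem IsQuasiSymmetricDesign.symm {𝓑 : Finset (Finset α)} {k lam s₁ s₂ : ℕ}
    (h : IsQuasiSymmetricDesign 𝓑 k lam s₁ s₂) : IsQuasiSymmetricDesign 𝓑 k lam s₂ s₁ :=
  ⟨h.toIsTwoDesign, fun B hB C hC hBC => (h.card_inter B hB C hC hBC).symm,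
    h.exists_card_inter_eq_right, h.exists_card_inter_eq_left⟩

theorem card_filter_and_and_or_not_and_not (s : Finset β) (p q r : β → Prop)
    [DecidablePred p] [DecidablePred q] [DecidablePred r] :
    #{b ∈ s | (p b ∧ q b ∧ r b) ∨ (¬p b ∧ ¬q b ∧ ¬r b)} + #{b ∈ s | p b} + #{b ∈ s | q b}
        + #{b ∈ s | r b}
      = #s + #{b ∈ s | p b ∧ q b} + #{b ∈ s | p b ∧ r b} + #{b ∈ s | q b ∧ r b} := by
  rw [card_eq_sum_ones s]
  simp only [card_filter, ← sum_add_distrib]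
  refine sum_congr rfl fun b _ => ?_
  by_cases p b <;> by_cases q b <;> by_cases r b <;> simp [*]

theorem card_filter_mem_iff {𝓑 : Finset (Finset α)} {r : ℕ} (hb : #𝓑 = 2 * r)
    (hr : ∀ a, #{B ∈ 𝓑 | a ∈ B} = r) (a : α) (P : Prop) [Decidable P] :
    #{B ∈ 𝓑 | a ∈ B ↔ P} = r := by
  by_cases hP : P
  · simpa [hP] using hr a
  · have := card_filter_add_card_filter_not (s := 𝓑) (fun B => a ∈ B)
    rw [hr, hb] at this
    simp only [hP, iff_false]
    omega

namespace IsTwoDesign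

variable {𝓑 : Finset (Finset α)} {k lam r : ℕ}

theorem card_filter_mem_and_mem (h : IsTwoDesign 𝓑 k lam) {a b : α} (hab : a ≠ b) :
    #{B ∈ 𝓑 | a ∈ B ∧ b ∈ B} = lam := by
  simpa [insert_subset_iff] using h.card_filter_subset {a, b} (card_pair hab)

theorem card_filter_all_or_none (h : IsTwoDesign 𝓑 k lam) (hb : #𝓑 = 2 * r)
    (hr : ∀ a, #{B ∈ 𝓑 | a ∈ B} = r) {a b c : α} (hab : a ≠ b) (hac : a ≠ c) (hbc : b ≠ c) :
    #{B ∈ 𝓑 | (a ∈ B ∧ b ∈ B ∧ c ∈ B) ∨ (a ∉ B ∧ b ∉ B ∧ c ∉ B)} + r = 3 * lam := by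
  have := card_filter_and_and_or_not_and_not 𝓑 (a ∈ ·) (b ∈ ·) (c ∈ ·)
  rw [hr, hr, hr, hb, h.card_filter_mem_and_mem hab, h.card_filter_mem_and_mem hac,
    h.card_filter_mem_and_mem hbc] at this
  omega

theorem sum_card_inter_erase (h : IsTwoDesign 𝓑 k lam) (hr : ∀ a, #{B ∈ 𝓑 | a ∈ B} = r)
    {B₀ : Finset α} (hB₀ : B₀ ∈ 𝓑) : ∑ C ∈ 𝓑.erase B₀, #(B₀ ∩ C) = k * (r - 1) := by
  rw [← h.card_eq B₀ hB₀]
  refine sum_card_inter fun a ha => ?_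
  rw [filter_erase, card_erase_of_mem (mem_filter.2 ⟨hB₀, ha⟩), hr]

variable [Fintype α]

theorem card_filter_mem_mul (h : IsTwoDesign 𝓑 k lam) (a : α) :
    #{B ∈ 𝓑 | a ∈ B} * (k - 1) = (Fintype.card α - 1) * lam := by
  have hpairs : ∀ b ∈ univ.erase a, #{B ∈ {B ∈ 𝓑 | a ∈ B} | b ∈ B} = lam := fun b hb => by
    rw [filter_filter]
    exact h.card_filter_mem_and_mem (ne_of_mem_erase hb).symm
  have hsize : ∀ B ∈ {B ∈ 𝓑 | a ∈ B}, #(univ.erase a ∩ B) = k - 1 := fun B hB => by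
    rw [mem_filter] at hB
    rw [erase_inter, univ_inter, card_erase_of_mem hB.2, h.card_eq B hB.1]
  rw [← card_univ, ← card_erase_of_mem (mem_univ a), ← sum_card_inter hpairs,
    sum_congr rfl hsize, sum_const, smul_eq_mul]

theorem card_filter_mem_eq (h : IsTwoDesign 𝓑 k lam) (hk : 1 < k)
    (hr : r * (k - 1) = (Fintype.card α - 1) * lam) (a : α) : #{B ∈ 𝓑 | a ∈ B} = r :=
  Nat.eq_of_mul_eq_mul_right (by omega) ((h.card_filter_mem_mul a).trans hr.symm)

theorem card_mul (h : IsTwoDesign 𝓑 k lam) (hr : ∀ a, #{B ∈ 𝓑 | a ∈ B} = r) :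
    #𝓑 * k = Fintype.card α * r := by
  rw [← sum_card hr, sum_congr rfl h.card_eq, sum_const, smul_eq_mul]

end IsTwoDesign

section Side

variable [Fintype α]

def sideContaining (x : α) (B : Finset α) : Finset α := if x ∈ B then B else Bᶜ

theorem mem_sideContaining_self (x : α) (B : Finset α) : x ∈ sideContaining x B := by
  unfold sideContaining; split_ifs with h <;> simp [h]

theorem card_sideContaining {x : α} {B : Finset α} {k : ℕ} (hv : Fintype.card α = 2 * k)
    (hB : #B = k) : #(sideContaining x B) = k := by
  unfold sideContaining; split_ifs
  · exact hB
  · rw [card_compl]; omega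

theorem card_sideContaining_inter {x : α} {B C : Finset α} {k : ℕ}
    (hv : Fintype.card α = 2 * k) (hB : #B = k) (hC : #C = k) :
    #(sideContaining x B ∩ sideContaining x C)
      = if (x ∈ B ↔ x ∈ C) then #(B ∩ C) else k - #(B ∩ C) := by
  have hunion := card_union_add_card_inter B C
  have hBC := card_sdiff_add_card_inter B C
  have hCB := card_sdiff_add_card_inter C B
  rw [inter_comm C B] at hCB
  by_cases hxB : x ∈ B <;> by_cases hxC : x ∈ C <;>
    simp only [sideContaining, hxB, hxC, if_true, if_false, iff_true, iff_false, not_true_eq_false]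
  · rw [← sdiff_eq_inter_compl]; omega
  · rw [inter_comm, ← sdiff_eq_inter_compl]; omega
  · rw [← compl_union, card_compl]; omega

theorem eq_or_disjoint_of_sideContaining_eq {x : α} {B C : Finset α}
    (h : sideContaining x B = sideContaining x C) : B = C ∨ Disjoint B C := by
  unfold sideContaining at h
  split_ifs at h
  · exact .inl h
  · exact .inr (h ▸ disjoint_compl_left)
  · exact .inr (h ▸ disjoint_compl_right)
  · exact .inl (compl_inj_iff.mp h)

variable {𝓑 : Finset (Finset α)} {k lam s₁ s₂ r : ℕ} {x : α}

theorem IsTwoDesign.exists_card_sideContaining_inter_ne (h : IsTwoDesign 𝓑 k lam)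
    (hv : Fintype.card α = 2 * k) (hb : #𝓑 = 2 * r) (hr : ∀ a, #{B ∈ 𝓑 | a ∈ B} = r)
    {B₀ : Finset α} (hB₀ : B₀ ∈ 𝓑) {t : ℕ} (ht : t < k) :
    ∃ C ∈ 𝓑.erase B₀, #(sideContaining x B₀ ∩ sideContaining x C) ≠ t := by
  by_contra! hall
  have hinter : ∀ C ∈ 𝓑.erase B₀, #(B₀ ∩ C) = if (x ∈ C ↔ x ∈ B₀) then t else k - t := by
    intro C hC
    have := hall C hC
    rw [card_sideContaining_inter hv (h.card_eq B₀ hB₀) (h.card_eq C (mem_of_mem_erase hC))]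
      at this
    have hle : #(B₀ ∩ C) ≤ k := h.card_eq B₀ hB₀ ▸ card_le_card inter_subset_left
    by_cases hxB₀ : x ∈ B₀ <;> by_cases hxC : x ∈ C <;> simp_all <;> omega
  have hsame : #{C ∈ 𝓑.erase B₀ | x ∈ C ↔ x ∈ B₀} = r - 1 := by
    rw [filter_erase, card_erase_of_mem (by simp [hB₀]), card_filter_mem_iff hb hr]
  have hopp : #{C ∈ 𝓑.erase B₀ | ¬(x ∈ C ↔ x ∈ B₀)} = r := by
    have := card_filter_add_card_filter_not (s := 𝓑.erase B₀) (fun C => x ∈ C ↔ x ∈ B₀)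
    rw [card_erase_of_mem hB₀, hb, hsame] at this
    omega
  have hsum := h.sum_card_inter_erase hr hB₀
  rw [sum_congr rfl hinter, sum_ite, sum_const, sum_const, smul_eq_mul, smul_eq_mul, hsame,
    hopp] at hsum
  obtain ⟨r, rfl⟩ : ∃ r', r = r' + 1 := ⟨r - 1, by have := card_pos.2 ⟨B₀, hB₀⟩; omega⟩
  obtain ⟨d, rfl⟩ : ∃ d, k = t + d + 1 := ⟨k - t - 1, by omega⟩
  rw [Nat.add_sub_cancel, show t + d + 1 - t = d + 1 by omega] at hsum
  linarith

theorem IsQuasiSymmetricDesign.card_sideContaining_inter_eq_or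
    (h : IsQuasiSymmetricDesign 𝓑 k lam s₁ s₂) (hv : Fintype.card α = 2 * k)
    (hk : k = s₁ + s₂) {B C : Finset α} (hB : B ∈ 𝓑) (hC : C ∈ 𝓑) (hBC : B ≠ C) :
    #(sideContaining x B ∩ sideContaining x C) = s₁ ∨
      #(sideContaining x B ∩ sideContaining x C) = s₂ := by
  rw [card_sideContaining_inter hv (h.card_eq B hB) (h.card_eq C hC)]
  have := h.card_inter B hB C hC hBC
  split_ifs <;> omega

end Side

section Trace

variable [Fintype β] {ι : β ↪ α} {x : α}

theorem map_filter_mem_eq_erase (hι : Set.range ι = {x}ᶜ) (S : Finset α) :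
    ({b | ι b ∈ S} : Finset β).map ι = S.erase x := by
  ext a
  have hrange := Set.ext_iff.mp hι a
  simp only [Set.mem_range, Set.mem_compl_iff, Set.mem_singleton_iff] at hrange
  simp only [mem_map, mem_filter, mem_univ, true_and, mem_erase]
  constructor
  · rintro ⟨b, hb, rfl⟩
    exact ⟨hrange.mp ⟨b, rfl⟩, hb⟩
  · rintro ⟨hax, ha⟩
    obtain ⟨b, rfl⟩ := hrange.mpr hax
    exact ⟨b, ha, rfl⟩

theorem card_filter_mem_add_one (hι : Set.range ι = {x}ᶜ) {S : Finset α} (hx : x ∈ S) :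
    #({b | ι b ∈ S} : Finset β) + 1 = #S := by
  rw [← card_map ι, map_filter_mem_eq_erase hι, card_erase_add_one hx]

theorem eq_of_filter_mem_eq (hι : Set.range ι = {x}ᶜ) {S T : Finset α} (hS : x ∈ S) (hT : x ∈ T)
    (h : ({b | ι b ∈ S} : Finset β) = ({b | ι b ∈ T} : Finset β)) : S = T := by
  refine erase_injOn' x hS hT ?_
  simp only [← map_filter_mem_eq_erase hι, h]

end Trace

section Derived

variable [Fintype α] [Fintype β] {ι : β ↪ α} {x : α}

variable (ι x) in
def derivedBlock (B : Finset α) : Finset β := {b | ι b ∈ sideContaining x B}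

theorem mem_derivedBlock {B : Finset α} {b : β} : b ∈ derivedBlock ι x B ↔ (ι b ∈ B ↔ x ∈ B) := by
  by_cases hxB : x ∈ B <;> simp [derivedBlock, sideContaining, hxB]

namespace IsQuasiSymmetricDesign

variable {𝓑 : Finset (Finset α)} {k lam s₁ s₂ r : ℕ}

theorem injOn_derivedBlock (h : IsQuasiSymmetricDesign 𝓑 k lam s₁ s₂) (hι : Set.range ι = {x}ᶜ)
    (hs₁ : 0 < s₁) (hs₂ : 0 < s₂) : Set.InjOn (derivedBlock ι x) 𝓑 := by
  intro B hB C hC hBC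
  obtain hBC | hdisj := eq_or_disjoint_of_sideContaining_eq <|
    eq_of_filter_mem_eq hι (mem_sideContaining_self x B) (mem_sideContaining_self x C) hBC
  · exact hBC
  · by_contra hne
    have := h.card_inter B hB C hC hne
    rw [disjoint_iff_inter_eq_empty.mp hdisj, card_empty] at this
    omega

variable [DecidableEq β]

theorem card_derivedBlock_inter_add_one (hι : Set.range ι = {x}ᶜ) (B C : Finset α) :
    #(derivedBlock ι x B ∩ derivedBlock ι x C) + 1
      = #(sideContaining x B ∩ sideContaining x C) := by
  rw [derivedBlock, derivedBlock, ← filter_and]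
  simp only [← mem_inter]
  exact card_filter_mem_add_one hι (mem_inter.2 ⟨mem_sideContaining_self x B,
    mem_sideContaining_self x C⟩)

theorem card_filter_pair_subset_image_derivedBlock (h : IsQuasiSymmetricDesign 𝓑 k lam s₁ s₂)
    (hι : Set.range ι = {x}ᶜ) (hs₁ : 0 < s₁) (hs₂ : 0 < s₂) (hb : #𝓑 = 2 * r)
    (hr : ∀ a, #{B ∈ 𝓑 | a ∈ B} = r) {Λ : ℕ} (hΛ : Λ + r = 3 * lam) {a b : β} (hab : a ≠ b) :
    #{D ∈ 𝓑.image (derivedBlock ι x) | {a, b} ⊆ D} = Λ := by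
  have hιx : ∀ c, x ≠ ι c := fun c hc => by
    have := Set.mem_range_self (f := ι) c
    rw [hι, ← hc] at this
    exact this rfl
  have hpair : ∀ B, {a, b} ⊆ derivedBlock ι x B ↔
      (x ∈ B ∧ ι a ∈ B ∧ ι b ∈ B) ∨ (x ∉ B ∧ ι a ∉ B ∧ ι b ∉ B) := fun B => by
    simp only [insert_subset_iff, singleton_subset_iff, mem_derivedBlock]
    tauto
  rw [filter_image, card_image_of_injOn <|
      (h.injOn_derivedBlock hι hs₁ hs₂).mono (coe_subset.2 (filter_subset _ _)),
    filter_congr fun B _ => hpair B]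
  have := h.card_filter_all_or_none hb hr (hιx a) (hιx b) (ι.injective.ne hab)
  omega

theorem exists_card_derivedBlock_inter_eq (h : IsQuasiSymmetricDesign 𝓑 k lam s₁ s₂)
    (hv : Fintype.card α = 2 * k) (hk : k = s₁ + s₂) (hs₁ : 0 < s₁) (hs₂ : 0 < s₂)
    (hb : #𝓑 = 2 * r) (hr : ∀ a, #{B ∈ 𝓑 | a ∈ B} = r) (hι : Set.range ι = {x}ᶜ) :
    ∃ D₁ ∈ 𝓑.image (derivedBlock ι x), ∃ D₂ ∈ 𝓑.image (derivedBlock ι x),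
      D₁ ≠ D₂ ∧ #(D₁ ∩ D₂) = s₁ - 1 := by
  obtain ⟨B₀, hB₀, -⟩ := h.exists_card_inter_eq_left
  obtain ⟨C, hC, hne⟩ :=
    h.toIsTwoDesign.exists_card_sideContaining_inter_ne (x := x) hv hb hr hB₀ (t := s₂) (by omega)
  obtain ⟨hCB₀, hC⟩ := mem_erase.mp hC
  refine ⟨_, mem_image_of_mem _ hB₀, _, mem_image_of_mem _ hC,
    fun hD => hCB₀ (h.injOn_derivedBlock hι hs₁ hs₂ hB₀ hC hD).symm, ?_⟩
  have := card_derivedBlock_inter_add_one hι B₀ C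
  have := h.card_sideContaining_inter_eq_or (x := x) hv hk hB₀ hC hCB₀.symm
  omega

theorem image_derivedBlock (h : IsQuasiSymmetricDesign 𝓑 k lam s₁ s₂) (hv : Fintype.card α = 2 * k)
    (hk : k = s₁ + s₂) (hs₁ : 0 < s₁) (hs₂ : 0 < s₂) (hr : r * (k - 1) = (2 * k - 1) * lam)
    {Λ : ℕ} (hΛ : Λ + r = 3 * lam) (hι : Set.range ι = {x}ᶜ) :
    IsQuasiSymmetricDesign (𝓑.image (derivedBlock ι x)) (k - 1) Λ (s₁ - 1) (s₂ - 1) := by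
  have hrep : ∀ a, #{B ∈ 𝓑 | a ∈ B} = r := h.card_filter_mem_eq (by omega) (hv ▸ hr)
  have hb : #𝓑 = 2 * r := Nat.eq_of_mul_eq_mul_right (by omega : 0 < k) <| by
    rw [h.card_mul hrep, hv]; ring
  refine ⟨⟨fun D hD => ?_, fun p hp => ?_⟩, fun D₁ hD₁ D₂ hD₂ hD => ?_,
    h.exists_card_derivedBlock_inter_eq hv hk hs₁ hs₂ hb hrep hι,
    h.symm.exists_card_derivedBlock_inter_eq hv (by omega) hs₂ hs₁ hb hrep hι⟩
  · obtain ⟨B, hB, rfl⟩ := mem_image.mp hD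
    have := card_filter_mem_add_one hι (mem_sideContaining_self x B)
    rw [card_sideContaining hv (h.card_eq B hB)] at this
    exact Nat.eq_sub_of_add_eq this
  · obtain ⟨a, b, hab, rfl⟩ := card_eq_two.mp hp
    exact h.card_filter_pair_subset_image_derivedBlock hι hs₁ hs₂ hb hrep hΛ hab
  · obtain ⟨B, hB, rfl⟩ := mem_image.mp hD₁
    obtain ⟨C, hC, rfl⟩ := mem_image.mp hD₂
    have := card_derivedBlock_inter_add_one hι B C
    have := h.card_sideContaining_inter_eq_or (x := x) hv hk hB hC (fun hBC => hD (hBC ▸ rfl))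
    omega

end IsQuasiSymmetricDesign

end Derived

theorem exists_embedding_range_eq_compl_singleton [Fintype α] [Fintype β]
    (hβ : Fintype.card β + 1 = Fintype.card α) : ∃ (ι : β ↪ α) (x : α), Set.range ι = {x}ᶜ := by
  obtain ⟨x⟩ : Nonempty α := Fintype.card_pos_iff.mp (by omega)
  have e : β ≃ {a // a ≠ x} := Fintype.equivOfCardEq (by simp [Fintype.card_subtype_compl]; omega)
  refine ⟨e.toEmbedding.trans (Function.Embedding.subtype _), x, ?_⟩
  rw [Function.Embedding.coe_trans, Set.range_comp, Equiv.coe_toEmbedding, e.range_eq_univ,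
    Set.image_univ]
  ext a
  simp

theorem IsQuasiSymmetricDesign.exists_of_card_add_one [Fintype α] [Fintype β] [DecidableEq β]
    {𝓑 : Finset (Finset α)} {k lam s₁ s₂ r Λ : ℕ} (h : IsQuasiSymmetricDesign 𝓑 k lam s₁ s₂)
    (hv : Fintype.card α = 2 * k) (hk : k = s₁ + s₂) (hs₁ : 0 < s₁) (hs₂ : 0 < s₂)
    (hr : r * (k - 1) = (2 * k - 1) * lam) (hΛ : Λ + r = 3 * lam)
    (hβ : Fintype.card β + 1 = Fintype.card α) :
    ∃ 𝓓 : Finset (Finset β), IsQuasiSymmetricDesign 𝓓 (k - 1) Λ (s₁ - 1) (s₂ - 1) := by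
  obtain ⟨ι, x, hι⟩ := exists_embedding_range_eq_compl_singleton hβ
  exact ⟨_, h.image_derivedBlock hv hk hs₁ hs₂ hr hΛ hι⟩

/-- **Theorem 10.3 (Gillespie).** A quasi-symmetric
`2-(2i(2i+1), i(2i+1), i(2i-1)(i+1); i²+i, i²)` design exists only if a quasi-symmetric
`2-(2i(2i+1)-1, (2i-1)(i+1), i(2i²+i-2); i²+i-1, i²-1)` design exists. -/
theorem stmt_17 (i : ℕ) (hi : 1 ≤ i)
    (hex : ∃ 𝓑 : Finset (Finset (Fin (2 * i * (2 * i + 1)))),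
      (∀ B ∈ 𝓑, B.card = i * (2 * i + 1)) ∧
      (∀ p : Finset (Fin (2 * i * (2 * i + 1))), p.card = 2 →
        (𝓑.filter fun B => p ⊆ B).card = i * (2 * i - 1) * (i + 1)) ∧
      (∀ B₁ ∈ 𝓑, ∀ B₂ ∈ 𝓑, B₁ ≠ B₂ →
        (B₁ ∩ B₂).card = i ^ 2 + i ∨ (B₁ ∩ B₂).card = i ^ 2) ∧
      (∃ B₁ ∈ 𝓑, ∃ B₂ ∈ 𝓑, B₁ ≠ B₂ ∧ (B₁ ∩ B₂).card = i ^ 2 + i) ∧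
      (∃ B₁ ∈ 𝓑, ∃ B₂ ∈ 𝓑, B₁ ≠ B₂ ∧ (B₁ ∩ B₂).card = i ^ 2)) :
    ∃ 𝓓 : Finset (Finset (Fin (2 * i * (2 * i + 1) - 1))),
      (∀ B ∈ 𝓓, B.card = (2 * i - 1) * (i + 1)) ∧
      (∀ p : Finset (Fin (2 * i * (2 * i + 1) - 1)), p.card = 2 →
        (𝓓.filter fun B => p ⊆ B).card = i * (2 * i ^ 2 + i - 2)) ∧
      (∀ B₁ ∈ 𝓓, ∀ B₂ ∈ 𝓓, B₁ ≠ B₂ →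
        (B₁ ∩ B₂).card = i ^ 2 + i - 1 ∨ (B₁ ∩ B₂).card = i ^ 2 - 1) ∧
      (∃ B₁ ∈ 𝓓, ∃ B₂ ∈ 𝓓, B₁ ≠ B₂ ∧ (B₁ ∩ B₂).card = i ^ 2 + i - 1) ∧
      (∃ B₁ ∈ 𝓓, ∃ B₂ ∈ 𝓓, B₁ ≠ B₂ ∧ (B₁ ∩ B₂).card = i ^ 2 - 1) := by
  obtain ⟨𝓑, hk, hl, hint, hs₁, hs₂⟩ := hex
  have hdesign : IsQuasiSymmetricDesign 𝓑 (i * (2 * i + 1)) (i * (2 * i - 1) * (i + 1))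
      (i ^ 2 + i) (i ^ 2) := ⟨⟨hk, hl⟩, hint, hs₁, hs₂⟩
  obtain ⟨j, rfl⟩ : ∃ j, i = j + 1 := ⟨i - 1, by omega⟩
  have h2i : 2 * (j + 1) - 1 = 2 * j + 1 := Nat.sub_eq_of_eq_add (by ring)
  have hk1 : (j + 1) * (2 * (j + 1) + 1) - 1 = (2 * (j + 1) - 1) * (j + 1 + 1) :=
    Nat.sub_eq_of_eq_add (by rw [h2i]; ring)
  have hv1 : 2 * ((j + 1) * (2 * (j + 1) + 1)) - 1 = 4 * j ^ 2 + 10 * j + 5 :=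
    Nat.sub_eq_of_eq_add (by ring)
  have hr : 4 * (j + 1) ^ 2 + 2 * (j + 1) - 1 = 4 * j ^ 2 + 10 * j + 5 :=
    Nat.sub_eq_of_eq_add (by ring)
  have hΛ : 2 * (j + 1) ^ 2 + (j + 1) - 2 = 2 * j ^ 2 + 5 * j + 1 :=
    Nat.sub_eq_of_eq_add (by ring)
  obtain ⟨𝓓, h𝓓⟩ := hdesign.exists_of_card_add_one
    (β := Fin (2 * (j + 1) * (2 * (j + 1) + 1) - 1))
    (r := (j + 1) * (4 * (j + 1) ^ 2 + 2 * (j + 1) - 1))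
    (Λ := (j + 1) * (2 * (j + 1) ^ 2 + (j + 1) - 2))
    (by rw [Fintype.card_fin]; ring) (by ring) (by positivity) (by positivity)
    (by rw [hk1, hv1, hr, h2i]; ring) (by rw [hΛ, hr, h2i]; ring)
    (by
      rw [Fintype.card_fin, Fintype.card_fin]
      exact Nat.sub_add_cancel (Nat.one_le_iff_ne_zero.mpr (by positivity)))
  rw [hk1] at h𝓓
  exact ⟨𝓓, h𝓓.card_eq, h𝓓.card_filter_subset, h𝓓.card_inter, h𝓓.exists_card_inter_eq_left,
    h𝓓.exists_card_inter_eq_right⟩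
end

section
/- (i) For every positive integer i with i ≡ 2 (mod 4), there is no quasi-symmetric 2-(2i(2i+1), i(2i+1), i(2i−1)(i+1)) design with block intersection numbers i² + i and i². (ii) For every positive integer i with i ≡ 4 (mod 8), there is no quasi-symmetric 2-(d, k, λ) design with block intersection numbers s₁ and s₂, where d = i(i³ + 6i² + 11i + 5), k = i(i³ + 5i² + 7i + 1)/2, λ = i(i+2)(i² + 2i − 1)(i³ + 5i² + 7i + 1)/4, s₁ = i(i+2)(i+1)²/4 and s₂ = i(i³ + 4i² + 3i − 4)/4. -/
/-!
All intersection numbers are even and `k ≡ 2 (mod 4)`. If a set `T` of blocks covers every point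
an even number of times, then `∑ₐ dₐ² = k |T| + ∑_{B ≠ B'} |B ∩ B'|` gives `2 |T| ≡ 0 (mod 4)`, so
`|T|` is even. By linear duality over `𝔽₂` the all-ones vector on blocks is then a sum of point
incidence vectors: some point set `P` meets every block in an odd number of points. Counting
incidences, `∑_B |B ∩ P|² = |P| r + |P| (|P| - 1) λ`, and odd squares are `1 (mod 8)`, so
`b ≡ |P| (r - λ) + |P|² λ (mod 8)`. Both families have `λ ≡ 2 (mod 4)`, `r ≡ λ + 4` and
`b ≡ 4 (mod 8)`, which no value of `|P|` satisfies.
-/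

open Finset

theorem Finset.sum_product_self_eq_sum_add_sum_offDiag {ι M : Type*} [DecidableEq ι]
    [AddCommMonoid M] (s : Finset ι) (f : ι × ι → M) :
    ∑ p ∈ s ×ˢ s, f p = ∑ i ∈ s, f (i, i) + ∑ p ∈ s.offDiag, f p := by
  rw [← diag_union_offDiag, sum_union (disjoint_diag_offDiag s), sum_diag]

theorem Finset.sum_sq_card_filter {β γ : Type*} (s : Finset β) (t : Finset γ) (r : β → γ → Prop)
    [∀ a b, Decidable (r a b)] :
    ∑ a ∈ s, #{b ∈ t | r a b} ^ 2 = ∑ p ∈ t ×ˢ t, #{a ∈ s | r a p.1 ∧ r a p.2} := by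
  have h := sum_card_bipartiteAbove_eq_sum_card_bipartiteBelow (s := s) (t := t ×ˢ t)
    (r := fun a p => r a p.1 ∧ r a p.2)
  simp only [bipartiteAbove, bipartiteBelow, filter_product, card_product] at h
  simpa only [sq] using h

theorem ZMod.sum_eq_card_filter_eq_one {ι : Type*} (s : Finset ι) (z : ι → ZMod 2) :
    ∑ i ∈ s, z i = #{i ∈ s | z i = 1} := by
  rw [card_filter, Nat.cast_sum]
  refine sum_congr rfl fun i _ => ?_
  generalize z i = x
  fin_cases x <;> rfl

theorem ZMod.natCast_sq_eq_one_of_odd {c : ℕ} (hc : Odd c) : (c : ZMod 8) ^ 2 = 1 := by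
  have h := (ZMod.natCast_eq_zero_iff _ 8).2 (Nat.eight_dvd_sq_sub_one_of_odd hc)
  rwa [Nat.cast_sub (Nat.one_le_pow _ _ hc.pos), Nat.cast_pow, Nat.cast_one, sub_eq_zero] at h

theorem Nat.even_of_four_dvd_mul {x k : ℕ} (hk : k % 4 = 2) (h : 4 ∣ x * k) : Even x := by
  obtain ⟨q, rfl⟩ : ∃ q, k = 4 * q + 2 := ⟨k / 4, by omega⟩
  rw [show x * (4 * q + 2) = 4 * (x * q) + 2 * x by ring] at h
  rw [Nat.even_iff]
  omega

section Design

variable {α : Type*} [DecidableEq α] {𝓑 : Finset (Finset α)} {k lam r : ℕ}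

theorem card_filter_mem_and_mem
    (hpair : ∀ p : Finset α, #p = 2 → #{B ∈ 𝓑 | p ⊆ B} = lam)
    {a b : α} (hab : a ≠ b) : #{B ∈ 𝓑 | a ∈ B ∧ b ∈ B} = lam := by
  simpa only [insert_subset_iff, singleton_subset_iff] using hpair {a, b} (card_pair hab)

theorem sum_sq_card_inter
    (hpair : ∀ p : Finset α, #p = 2 → #{B ∈ 𝓑 | p ⊆ B} = lam)
    (hr : ∀ a, #{B ∈ 𝓑 | a ∈ B} = r) (P : Finset α) :
    ∑ B ∈ 𝓑, #(B ∩ P) ^ 2 = #P * r + #P.offDiag * lam := by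
  have h := sum_sq_card_filter 𝓑 P (fun B a => a ∈ B)
  simp only [filter_mem_eq_inter, inter_comm P] at h
  rw [h, sum_product_self_eq_sum_add_sum_offDiag]
  simp only [and_self, hr, sum_const, smul_eq_mul]
  congr 1
  rw [sum_congr rfl fun p hp => card_filter_mem_and_mem hpair (mem_offDiag.1 hp).2.2,
    sum_const, smul_eq_mul]

variable [Fintype α]

theorem card_filter_mem_mul_sub_one
    (hcard : ∀ B ∈ 𝓑, #B = k)
    (hpair : ∀ p : Finset α, #p = 2 → #{B ∈ 𝓑 | p ⊆ B} = lam) (a : α) :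
    #{B ∈ 𝓑 | a ∈ B} * (k - 1) = lam * (Fintype.card α - 1) := by
  have h := sum_card_bipartiteAbove_eq_sum_card_bipartiteBelow
    (s := {B ∈ 𝓑 | a ∈ B}) (t := univ.erase a) (r := fun B b => b ∈ B)
  have hk : ∀ B ∈ {B ∈ 𝓑 | a ∈ B},
      #(bipartiteAbove (fun B b => b ∈ B) (univ.erase a) B) = k - 1 := by
    intro B hB
    rw [mem_filter] at hB
    rw [bipartiteAbove, ← hcard B hB.1, ← card_erase_of_mem hB.2]
    congr 1
    ext b
    simp [and_comm]
  have hl : ∀ b ∈ univ.erase a,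
      #(bipartiteBelow (fun B b => b ∈ B) {B ∈ 𝓑 | a ∈ B} b) = lam := by
    intro b hb
    rw [bipartiteBelow, filter_filter]
    exact card_filter_mem_and_mem hpair (ne_of_mem_erase hb).symm
  rw [sum_congr rfl hk, sum_congr rfl hl, sum_const, sum_const, card_erase_of_mem (mem_univ a),
    card_univ, smul_eq_mul, smul_eq_mul] at h
  rw [h, mul_comm]

theorem card_mul_eq_card_mul_of_card_filter_mem (hcard : ∀ B ∈ 𝓑, #B = k)
    (hr : ∀ a, #{B ∈ 𝓑 | a ∈ B} = r) : #𝓑 * k = Fintype.card α * r := by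
  have h := sum_card_bipartiteAbove_eq_sum_card_bipartiteBelow
    (s := 𝓑) (t := univ) (r := fun B b => b ∈ B)
  simp only [bipartiteAbove, bipartiteBelow, filter_mem_eq_inter, univ_inter, hr] at h
  rwa [sum_congr rfl hcard, sum_const, sum_const, card_univ, smul_eq_mul, smul_eq_mul] at h


theorem even_card_of_even_degrees (T : Finset (Finset α)) (hcard : ∀ B ∈ T, #B = k)
    (hk : k % 4 = 2) (hint : ∀ B₁ ∈ T, ∀ B₂ ∈ T, B₁ ≠ B₂ → Even #(B₁ ∩ B₂))
    (hdeg : ∀ a, Even #{B ∈ T | a ∈ B}) : Even #T := by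
  have key : ∑ a, #{B ∈ T | a ∈ B} ^ 2 = #T * k + ∑ p ∈ T.offDiag, #(p.1 ∩ p.2) := by
    rw [sum_sq_card_filter, sum_product_self_eq_sum_add_sum_offDiag]
    simp only [← mem_inter, filter_mem_eq_inter, univ_inter, inter_self]
    rw [sum_congr rfl hcard, sum_const, smul_eq_mul]
  have hsq : 4 ∣ ∑ a, #{B ∈ T | a ∈ B} ^ 2 := dvd_sum fun a _ => by
    obtain ⟨m, hm⟩ := hdeg a
    exact ⟨m ^ 2, by rw [hm]; ring⟩
  -- the terms for `(B₁, B₂)` and `(B₂, B₁)` are equal and even, so they cancel mod 4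
  have hoff : 4 ∣ ∑ p ∈ T.offDiag, #(p.1 ∩ p.2) := by
    rw [← ZMod.natCast_eq_zero_iff, Nat.cast_sum]
    refine sum_involution (fun p _ => p.swap) (fun p hp => ?_) (fun p hp _ => ?_)
      (fun p hp => mem_offDiag.2 ?_) (fun p _ => rfl)
    · obtain ⟨h₁, h₂, hne⟩ := mem_offDiag.1 hp
      obtain ⟨m, hm⟩ := hint _ h₁ _ h₂ hne
      rw [Prod.fst_swap, Prod.snd_swap, inter_comm p.2, hm, ← Nat.cast_add,
        show m + m + (m + m) = 4 * m by ring, Nat.cast_mul]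
      exact mul_eq_zero_of_left rfl _
    · exact fun h => (mem_offDiag.1 hp).2.2 (congrArg Prod.snd h)
    · obtain ⟨h₁, h₂, hne⟩ := mem_offDiag.1 hp
      exact ⟨h₂, h₁, hne.symm⟩
  rw [key] at hsq
  exact Nat.even_of_four_dvd_mul hk ((Nat.dvd_add_left hoff).1 hsq)

theorem exists_odd_card_inter (hcard : ∀ B ∈ 𝓑, #B = k) (hk : k % 4 = 2)
    (hint : ∀ B₁ ∈ 𝓑, ∀ B₂ ∈ 𝓑, B₁ ≠ B₂ → Even #(B₁ ∩ B₂)) :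
    ∃ P : Finset α, ∀ B ∈ 𝓑, Odd #(B ∩ P) := by
  let g : (Finset α → ZMod 2) →ₗ[ZMod 2] (α → ZMod 2) :=
    LinearMap.pi fun a => ∑ B ∈ 𝓑 with a ∈ B, LinearMap.proj B
  have hg : ∀ z a, g z a = ∑ B ∈ 𝓑 with a ∈ B, z B := by simp [g]
  let σ : Module.Dual (ZMod 2) (Finset α → ZMod 2) := ∑ B ∈ 𝓑, LinearMap.proj B
  have hσ : ∀ z, σ z = ∑ B ∈ 𝓑, z B := by simp [σ]
  have hσker : σ ∈ (LinearMap.ker g).dualAnnihilator := by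
    refine (Submodule.mem_dualAnnihilator _).2 fun z hz => ?_
    have hdeg : ∀ a, Even #{B ∈ {B ∈ 𝓑 | z B = 1} | a ∈ B} := by
      intro a
      have h := congr_fun (LinearMap.mem_ker.1 hz) a
      rw [hg, Pi.zero_apply, ZMod.sum_eq_card_filter_eq_one, filter_filter] at h
      rw [← ZMod.natCast_eq_zero_iff_even, filter_filter, ← h]
      simp only [and_comm]
    rw [hσ, ZMod.sum_eq_card_filter_eq_one, ZMod.natCast_eq_zero_iff_even]
    exact even_card_of_even_degrees _ (fun B hB => hcard B (mem_filter.1 hB).1) hk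
      (fun B₁ h₁ B₂ h₂ => hint B₁ (mem_filter.1 h₁).1 B₂ (mem_filter.1 h₂).1) hdeg
  rw [← LinearMap.range_dualMap_eq_dualAnnihilator_ker] at hσker
  obtain ⟨φ, hφ⟩ := hσker
  refine ⟨({a | φ (fun j => if a = j then 1 else 0) = 1} : Finset α), fun B hB => ?_⟩
  have h1 : σ (Pi.single B 1) = 1 := by simp [hσ, hB]
  rw [← hφ, LinearMap.dualMap_apply', LinearMap.comp_apply, LinearMap.pi_apply_eq_sum_univ] at h1
  simp only [hg, sum_pi_single', mem_filter, hB, true_and, ite_smul, one_smul, zero_smul,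
    sum_ite_mem, univ_inter, ZMod.sum_eq_card_filter_eq_one, ZMod.natCast_eq_one_iff_odd] at h1
  rwa [inter_filter, inter_univ]

theorem false_of_even_inter_of_mod_eight {b : ℕ} (hcard : ∀ B ∈ 𝓑, #B = k)
    (hpair : ∀ p : Finset α, #p = 2 → #{B ∈ 𝓑 | p ⊆ B} = lam)
    (hint : ∀ B₁ ∈ 𝓑, ∀ B₂ ∈ 𝓑, B₁ ≠ B₂ → Even #(B₁ ∩ B₂))
    (hr : r * (k - 1) = lam * (Fintype.card α - 1)) (hb : b * k = Fintype.card α * r)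
    (hk : k % 4 = 2) (hlam : lam % 4 = 2) (hrlam : r % 8 = (lam + 4) % 8) (hb8 : b % 8 = 4) :
    False := by
  have hdeg : ∀ a, #{B ∈ 𝓑 | a ∈ B} = r := fun a => Nat.eq_of_mul_eq_mul_right (by omega)
    ((card_filter_mem_mul_sub_one hcard hpair a).trans hr.symm)
  have hb' : #𝓑 = b := Nat.eq_of_mul_eq_mul_right (by omega)
    ((card_mul_eq_card_mul_of_card_filter_mem hcard hdeg).trans hb.symm)
  obtain ⟨P, hP⟩ := exists_odd_card_inter hcard hk hint
  have hsum : ((∑ B ∈ 𝓑, #(B ∩ P) ^ 2 : ℕ) : ZMod 8) = 4 := by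
    rw [Nat.cast_sum, sum_congr rfl fun B hB => by
      rw [Nat.cast_pow, ZMod.natCast_sq_eq_one_of_odd (hP B hB)], sum_const, hb', nsmul_one,
      ← ZMod.natCast_mod, hb8, Nat.cast_ofNat]
  have hr8 : (r : ZMod 8) = lam + 4 := by
    rw [← ZMod.natCast_mod, hrlam, ZMod.natCast_mod, Nat.cast_add, Nat.cast_ofNat]
  have hlam8 : (lam : ZMod 8) = 2 ∨ (lam : ZMod 8) = 6 := by
    rw [← ZMod.natCast_mod]
    rcases (by omega : lam % 8 = 2 ∨ lam % 8 = 6) with h | h <;> simp [h]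
  rw [sum_sq_card_inter hpair hdeg P, offDiag_card, Nat.cast_add, Nat.cast_mul, Nat.cast_mul,
    Nat.cast_sub (Nat.le_mul_self _), Nat.cast_mul, hr8] at hsum
  have hmod : ∀ x l : ZMod 8, l = 2 ∨ l = 6 → x * (l + 4) + (x * x - x) * l ≠ 4 := by decide
  exact hmod _ _ hlam8 hsum

theorem false_of_design_of_mod_four_eq_two {i : ℕ} (hi : i % 4 = 2)
    {𝓑 : Finset (Finset (Fin (2 * i * (2 * i + 1))))}
    (hcard : ∀ B ∈ 𝓑, #B = i * (2 * i + 1))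
    (hpair : ∀ p : Finset (Fin (2 * i * (2 * i + 1))), #p = 2 →
      #{B ∈ 𝓑 | p ⊆ B} = i * (2 * i - 1) * (i + 1))
    (hint : ∀ B₁ ∈ 𝓑, ∀ B₂ ∈ 𝓑, B₁ ≠ B₂ → #(B₁ ∩ B₂) = i ^ 2 + i ∨ #(B₁ ∩ B₂) = i ^ 2) :
    False := by
  obtain ⟨t, rfl⟩ : ∃ t, i = 4 * t + 2 := ⟨i / 4, by omega⟩
  have hlam : (4 * t + 2) * (2 * (4 * t + 2) - 1) * (4 * t + 2 + 1) =
      2 * ((2 * t + 1) * (8 * t + 3) * (4 * t + 3)) := by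
    rw [show 2 * (4 * t + 2) - 1 = 8 * t + 3 by omega]
    ring
  have hk1 : (4 * t + 2) * (2 * (4 * t + 2) + 1) - 1 = (8 * t + 3) * (4 * t + 3) := by
    rw [show (4 * t + 2) * (2 * (4 * t + 2) + 1) = (8 * t + 3) * (4 * t + 3) + 1 by ring,
      Nat.add_sub_cancel]
  have hn1 : 2 * (4 * t + 2) * (2 * (4 * t + 2) + 1) - 1 = 64 * t ^ 2 + 72 * t + 19 := by
    rw [show 2 * (4 * t + 2) * (2 * (4 * t + 2) + 1) = 64 * t ^ 2 + 72 * t + 19 + 1 by ring,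
      Nat.add_sub_cancel]
  -- `r = i (4 i ^ 2 + 2 i - 1)` and `b = 2 r` solve `r (k - 1) = λ (v - 1)` and `b k = v r`
  refine false_of_even_inter_of_mod_eight (r := (4 * t + 2) * (64 * t ^ 2 + 72 * t + 19))
    (b := 4 * ((2 * t + 1) * (64 * t ^ 2 + 72 * t + 19))) hcard hpair ?_ ?_ ?_ ?_ ?_ ?_ ?_
  · intro B₁ h₁ B₂ h₂ hne
    rcases hint B₁ h₁ B₂ h₂ hne with h | h <;>
      simp [h, Nat.even_iff, Nat.add_mod, Nat.mul_mod, Nat.pow_mod]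
  · rw [Fintype.card_fin, hk1, hn1, hlam]
    ring
  · rw [Fintype.card_fin]
    ring
  · have : (2 * t + 1) * (8 * t + 5) % 2 = 1 := by simp [Nat.add_mod, Nat.mul_mod]
    rw [show (4 * t + 2) * (2 * (4 * t + 2) + 1) = 2 * ((2 * t + 1) * (8 * t + 5)) by ring]
    omega
  · have : (2 * t + 1) * (8 * t + 3) * (4 * t + 3) % 2 = 1 := by simp [Nat.add_mod, Nat.mul_mod]
    rw [hlam]
    omega
  · have : (2 * t + 1) ^ 2 * (8 * t + 5) % 2 = 1 := by
      simp [Nat.add_mod, Nat.mul_mod, Nat.pow_mod]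
    rw [hlam, show (4 * t + 2) * (64 * t ^ 2 + 72 * t + 19) =
      2 * ((2 * t + 1) * (8 * t + 3) * (4 * t + 3)) + 4 * ((2 * t + 1) ^ 2 * (8 * t + 5)) by ring]
    omega
  · have : (2 * t + 1) * (64 * t ^ 2 + 72 * t + 19) % 2 = 1 := by
      simp [Nat.add_mod, Nat.mul_mod, Nat.pow_mod]
    omega

theorem false_of_design_of_mod_eight_eq_four {i k lam s₁ s₂ : ℕ} (hi : i % 8 = 4)
    (h2k : 2 * k = i * (i ^ 3 + 5 * i ^ 2 + 7 * i + 1))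
    (h4lam : 4 * lam = i * (i + 2) * (i ^ 2 + 2 * i - 1) * (i ^ 3 + 5 * i ^ 2 + 7 * i + 1))
    (h4s₁ : 4 * s₁ = i * (i + 2) * (i + 1) ^ 2)
    (h4s₂ : 4 * s₂ = i * (i ^ 3 + 4 * i ^ 2 + 3 * i - 4))
    {𝓑 : Finset (Finset (Fin (i * (i ^ 3 + 6 * i ^ 2 + 11 * i + 5))))}
    (hcard : ∀ B ∈ 𝓑, #B = k)
    (hpair : ∀ p : Finset (Fin (i * (i ^ 3 + 6 * i ^ 2 + 11 * i + 5))), #p = 2 →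
      #{B ∈ 𝓑 | p ⊆ B} = lam)
    (hint : ∀ B₁ ∈ 𝓑, ∀ B₂ ∈ 𝓑, B₁ ≠ B₂ → #(B₁ ∩ B₂) = s₁ ∨ #(B₁ ∩ B₂) = s₂) :
    False := by
  obtain ⟨t, rfl⟩ : ∃ t, i = 8 * t + 4 := ⟨i / 8, by omega⟩
  -- `L = i ^ 2 + 2 * i - 1` and `Y = i ^ 3 + 5 * i ^ 2 + 6 * i - 1` without truncated subtraction;
  -- `r = k * Y` and `b = v * Y` solve `r (k - 1) = λ (v - 1)` and `b k = v r`
  set L := 64 * t ^ 2 + 80 * t + 23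
  set Y := 512 * t ^ 3 + 1088 * t ^ 2 + 752 * t + 167
  set X := (8 * t + 4) ^ 3 + 5 * (8 * t + 4) ^ 2 + 7 * (8 * t + 4) + 1
  have hk : k = 2 * ((2 * t + 1) * X) := by
    have : 2 * k = 2 * (2 * ((2 * t + 1) * X)) := h2k.trans (by ring)
    omega
  have hlam : lam = 2 * ((2 * t + 1) * (4 * t + 3) * L * X) := by
    have hL : (8 * t + 4) ^ 2 + 2 * (8 * t + 4) - 1 = L := by
      rw [show (8 * t + 4) ^ 2 + 2 * (8 * t + 4) = L + 1 by ring, Nat.add_sub_cancel]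
    have : 4 * lam = 4 * (2 * ((2 * t + 1) * (4 * t + 3) * L * X)) := by
      rw [h4lam, hL]
      ring
    omega
  have hs₁ : s₁ = 2 * ((2 * t + 1) * (4 * t + 3) * (8 * t + 5) ^ 2) := by
    have : 4 * s₁ = 4 * (2 * ((2 * t + 1) * (4 * t + 3) * (8 * t + 5) ^ 2)) :=
      h4s₁.trans (by ring)
    omega
  have hs₂ : s₂ = 2 * (4 * (2 * t + 1) * (64 * t ^ 3 + 128 * t ^ 2 + 83 * t + 17)) := by
    have h : (8 * t + 4) ^ 3 + 4 * (8 * t + 4) ^ 2 + 3 * (8 * t + 4) - 4 =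
        8 * (64 * t ^ 3 + 128 * t ^ 2 + 83 * t + 17) := by
      rw [show (8 * t + 4) ^ 3 + 4 * (8 * t + 4) ^ 2 + 3 * (8 * t + 4) =
        8 * (64 * t ^ 3 + 128 * t ^ 2 + 83 * t + 17) + 4 by ring, Nat.add_sub_cancel]
    have : 4 * s₂ = 4 * (2 * (4 * (2 * t + 1) * (64 * t ^ 3 + 128 * t ^ 2 + 83 * t + 17))) := by
      rw [h4s₂, h]
      ring
    omega
  have hk1 : k - 1 = (8 * t + 5) * (4 * t + 3) * L := by
    rw [hk, show 2 * ((2 * t + 1) * X) = (8 * t + 5) * (4 * t + 3) * L + 1 by ring,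
      Nat.add_sub_cancel]
  have hn1 : (8 * t + 4) * ((8 * t + 4) ^ 3 + 6 * (8 * t + 4) ^ 2 + 11 * (8 * t + 4) + 5) - 1 =
      (8 * t + 5) * Y := by
    rw [show (8 * t + 4) * ((8 * t + 4) ^ 3 + 6 * (8 * t + 4) ^ 2 + 11 * (8 * t + 4) + 5) =
      (8 * t + 5) * Y + 1 by ring, Nat.add_sub_cancel]
  refine false_of_even_inter_of_mod_eight (r := k * Y)
    (b := 4 * ((2 * t + 1) * ((8 * t + 4) ^ 3 + 6 * (8 * t + 4) ^ 2 + 11 * (8 * t + 4) + 5) * Y))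
    hcard hpair ?_ ?_ ?_ ?_ ?_ ?_ ?_
  · intro B₁ h₁ B₂ h₂ hne
    rcases hint B₁ h₁ B₂ h₂ hne with h | h <;> simp only [h, hs₁, hs₂, even_two_mul]
  · rw [Fintype.card_fin, hk1, hn1, hlam, hk]
    ring
  · rw [Fintype.card_fin]
    ring
  · have : (2 * t + 1) * X % 2 = 1 := by simp [X, Nat.add_mod, Nat.mul_mod, Nat.pow_mod]
    omega
  · have : (2 * t + 1) * (4 * t + 3) * L * X % 2 = 1 := by
      simp [L, X, Nat.add_mod, Nat.mul_mod, Nat.pow_mod]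
    omega
  · have : (2 * t + 1) ^ 2 * X * (8 * t + 7) ^ 2 % 2 = 1 := by
      simp [X, Nat.add_mod, Nat.mul_mod, Nat.pow_mod]
    rw [hlam, hk, show 2 * ((2 * t + 1) * X) * Y =
      2 * ((2 * t + 1) * (4 * t + 3) * L * X) + 4 * ((2 * t + 1) ^ 2 * X * (8 * t + 7) ^ 2) by ring]
    omega
  · have : (2 * t + 1) * ((8 * t + 4) ^ 3 + 6 * (8 * t + 4) ^ 2 + 11 * (8 * t + 4) + 5) * Y %
        2 = 1 := by
      simp [Y, Nat.add_mod, Nat.mul_mod, Nat.pow_mod]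
    omega

/-- **Proposition 10.4 (Gillespie).** (i) For `i ≡ 2 (mod 4)` there is no quasi-symmetric
`2-(2i(2i+1), i(2i+1), i(2i-1)(i+1); i²+i, i²)` design.  (ii) For `i ≡ 4 (mod 8)` there is
no quasi-symmetric `2-(d, k, λ; s₁, s₂)` design with the Family-1 parameters
`d = i(i³+6i²+11i+5)`, `2k = i(i³+5i²+7i+1)`, `4λ = i(i+2)(i²+2i-1)(i³+5i²+7i+1)`,
`4s₁ = i(i+2)(i+1)²`, `4s₂ = i(i³+4i²+3i-4)`. -/
theorem stmt_18 :
    (∀ i : ℕ, 0 < i → i % 4 = 2 →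
      ¬ ∃ 𝓑 : Finset (Finset (Fin (2 * i * (2 * i + 1)))),
        (∀ B ∈ 𝓑, B.card = i * (2 * i + 1)) ∧
        (∀ p : Finset (Fin (2 * i * (2 * i + 1))), p.card = 2 →
          (𝓑.filter fun B => p ⊆ B).card = i * (2 * i - 1) * (i + 1)) ∧
        (∀ B₁ ∈ 𝓑, ∀ B₂ ∈ 𝓑, B₁ ≠ B₂ →
          (B₁ ∩ B₂).card = i ^ 2 + i ∨ (B₁ ∩ B₂).card = i ^ 2) ∧
        (∃ B₁ ∈ 𝓑, ∃ B₂ ∈ 𝓑, B₁ ≠ B₂ ∧ (B₁ ∩ B₂).card = i ^ 2 + i) ∧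
        (∃ B₁ ∈ 𝓑, ∃ B₂ ∈ 𝓑, B₁ ≠ B₂ ∧ (B₁ ∩ B₂).card = i ^ 2)) ∧
    (∀ i : ℕ, 0 < i → i % 8 = 4 →
      ∀ k lam s₁ s₂ : ℕ,
        2 * k = i * (i ^ 3 + 5 * i ^ 2 + 7 * i + 1) →
        4 * lam = i * (i + 2) * (i ^ 2 + 2 * i - 1) * (i ^ 3 + 5 * i ^ 2 + 7 * i + 1) →
        4 * s₁ = i * (i + 2) * (i + 1) ^ 2 →
        4 * s₂ = i * (i ^ 3 + 4 * i ^ 2 + 3 * i - 4) →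
        ¬ ∃ 𝓑 : Finset (Finset (Fin (i * (i ^ 3 + 6 * i ^ 2 + 11 * i + 5)))),
          (∀ B ∈ 𝓑, B.card = k) ∧
          (∀ p : Finset (Fin (i * (i ^ 3 + 6 * i ^ 2 + 11 * i + 5))), p.card = 2 →
            (𝓑.filter fun B => p ⊆ B).card = lam) ∧
          (∀ B₁ ∈ 𝓑, ∀ B₂ ∈ 𝓑, B₁ ≠ B₂ →
            (B₁ ∩ B₂).card = s₁ ∨ (B₁ ∩ B₂).card = s₂) ∧
          (∃ B₁ ∈ 𝓑, ∃ B₂ ∈ 𝓑, B₁ ≠ B₂ ∧ (B₁ ∩ B₂).card = s₁) ∧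
          (∃ B₁ ∈ 𝓑, ∃ B₂ ∈ 𝓑, B₁ ≠ B₂ ∧ (B₁ ∩ B₂).card = s₂)) := by
  constructor
  · rintro i - hi ⟨𝓑, hcard, hpair, hint, -, -⟩
    exact false_of_design_of_mod_four_eq_two hi hcard hpair hint
  · rintro i - hi k lam s₁ s₂ h2k h4lam h4s₁ h4s₂ ⟨𝓑, hcard, hpair, hint, -, -⟩
    exact false_of_design_of_mod_eight_eq_four hi h2k h4lam h4s₁ h4s₂ hcard hpair hint
end Design
end
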